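/- Consider the two-point boundary value problem ẋ(t) = A(t)x(t) + B(t)u⁻(t) − B(t)B(t)ᵀλ(t), x(t₀) = x₀, x(t_f) = x_f, and λ̇(t) = −x(t) + x⁻(t) − A(t)ᵀλ(t), with continuous matrix functions A, B and fixed x⁻ ∈ L², u⁻ ∈ L². If (x, λ) solves this TPBVP, then the pair (y, v) with y = x and v(t) = u⁻(t) − B(t)ᵀλ(t) satisfies the variational inequality characterizing the projection of (x⁻, u⁻) onto the affine set A = {(x,u) : ẋ = A(t)x + B(t)u, x(t₀)=x₀, x(t_f)=x_f}; namely, for every (ỹ, ṽ) ∈ A, ⟨(ỹ,ṽ) − (y,v), (x⁻,u⁻) − (y,v)⟩_{L²×L²} ≤ 0. -/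

import Mathlib

/-!
Along any admissible pair `(ỹ, ṽ)`, the costate equation makes `t ↦ ⟪ỹ t - x t, λ t⟫` an
antiderivative of the integrand: the `A`-terms cancel against `Aᵀλ`, and the `B`-terms combine
into `⟪ṽ - v, Bᵀλ⟫` with `v = u⁻ - Bᵀλ`. Since `ỹ` and `x` share both boundary values, this
antiderivative vanishes at `t₀` and `t_f`, so the integral is `0`.
-/

open MeasureTheory Matrix

section

variable {ι κ R : Type*} [Fintype ι] [Fintype κ]

theorem hasDerivAt_dotProduct {f g : ℝ → ι → ℝ} {f' g' : ι → ℝ} {t : ℝ}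
    (hf : ∀ i, HasDerivAt (fun s => f s i) (f' i) t)
    (hg : ∀ i, HasDerivAt (fun s => g s i) (g' i) t) :
    HasDerivAt (fun s => f s ⬝ᵥ g s) (f' ⬝ᵥ g t + f t ⬝ᵥ g') t := by
  simpa only [dotProduct, Finset.sum_add_distrib] using
    HasDerivAt.fun_sum (u := Finset.univ) fun i _ => (hf i).fun_mul (hg i)

theorem costate_pairing_deriv_eq [CommRing R] (A : Matrix ι ι R) (B : Matrix ι κ R)
    (y x l w : ι → R) (v u : κ → R) :
    (A *ᵥ y + B *ᵥ v - (A *ᵥ x + B *ᵥ u - (B * Bᵀ) *ᵥ l)) ⬝ᵥ l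
        + (y - x) ⬝ᵥ (-x + w - Aᵀ *ᵥ l)
      = (y - x) ⬝ᵥ (w - x) + (v - (u - Bᵀ *ᵥ l)) ⬝ᵥ (u - (u - Bᵀ *ᵥ l)) := by
  have hstate : A *ᵥ y + B *ᵥ v - (A *ᵥ x + B *ᵥ u - (B * Bᵀ) *ᵥ l)
      = A *ᵥ (y - x) + B *ᵥ (v - (u - Bᵀ *ᵥ l)) := by
    rw [mulVec_sub, mulVec_sub, mulVec_sub, ← mulVec_mulVec]
    abel
  have hcostate : -x + w - Aᵀ *ᵥ l = (w - x) - Aᵀ *ᵥ l := by abel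
  rw [hstate, hcostate, add_dotProduct, dotProduct_sub, dotProduct_mulVec (y - x) Aᵀ,
    vecMul_transpose, dotProduct_comm (B *ᵥ _), dotProduct_mulVec l B, ← mulVec_transpose,
    sub_sub_cancel, dotProduct_comm _ (Bᵀ *ᵥ l)]
  ring

end

theorem integral_Icc_eq_zero_of_hasDerivAt {g F : ℝ → ℝ} {a b : ℝ} (hab : a ≤ b)
    (hg : ∀ t ∈ Set.Icc a b, HasDerivAt g (F t) t) (hF : IntervalIntegrable F volume a b)
    (hgab : g a = g b) : ∫ t in Set.Icc a b, F t = 0 := by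
  rw [integral_Icc_eq_integral_Ioc, ← intervalIntegral.integral_of_le hab,
    intervalIntegral.integral_eq_sub_of_hasDerivAt (by rwa [Set.uIcc_of_le hab]) hF, hgab,
    sub_self]

theorem stmt_12_general (n m : ℕ) (t0 tf : ℝ) (hts : t0 ≤ tf)
    (A : ℝ → Matrix (Fin n) (Fin n) ℝ) (B : ℝ → Matrix (Fin n) (Fin m) ℝ)
    (hB : Continuous B)
    (x0 xf : Fin n → ℝ)
    (xm : ℝ → Fin n → ℝ) (um : ℝ → Fin m → ℝ)
    (hxm : Continuous xm) (hum : Continuous um)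
    (x lam : ℝ → Fin n → ℝ) (hxc : Continuous x) (hlamc : Continuous lam)
    (hx : ∀ t ∈ Set.Icc t0 tf, ∀ i, HasDerivAt (fun s => x s i)
      ((A t).mulVec (x t) i + (B t).mulVec (um t) i
        - ((B t) * (B t).transpose).mulVec (lam t) i) t)
    (hlam : ∀ t ∈ Set.Icc t0 tf, ∀ i, HasDerivAt (fun s => lam s i)
      (-(x t i) + xm t i - (A t).transpose.mulVec (lam t) i) t)
    (hx0 : x t0 = x0) (hxf : x tf = xf) :
    ∀ (ytil : ℝ → Fin n → ℝ) (vtil : ℝ → Fin m → ℝ),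
      Continuous ytil → Continuous vtil →
      (∀ t ∈ Set.Icc t0 tf, ∀ i, HasDerivAt (fun s => ytil s i)
        ((A t).mulVec (ytil t) i + (B t).mulVec (vtil t) i) t) →
      ytil t0 = x0 → ytil tf = xf →
      (∫ t in Set.Icc t0 tf,
          ((∑ i, (ytil t i - x t i) * (xm t i - x t i)) +
            ∑ j, (vtil t j - (um t j - (B t).transpose.mulVec (lam t) j)) *
              (um t j - (um t j - (B t).transpose.mulVec (lam t) j)))) ≤ 0 := by
  intro ytil vtil hyc hvc hy hy0 hyf
  refine le_of_eq <| integral_Icc_eq_zero_of_hasDerivAt hts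
    (g := fun s => (ytil s - x s) ⬝ᵥ lam s) (fun t ht => ?_) ?_ (by simp [hy0, hyf, hx0, hxf])
  · have hpairing : HasDerivAt (fun s => (ytil s - x s) ⬝ᵥ lam s)
        ((A t *ᵥ ytil t + B t *ᵥ vtil t - (A t *ᵥ x t + B t *ᵥ um t - (B t * (B t)ᵀ) *ᵥ lam t))
            ⬝ᵥ lam t + (ytil t - x t) ⬝ᵥ (-x t + xm t - (A t)ᵀ *ᵥ lam t)) t :=
      hasDerivAt_dotProduct (fun i => (hy t ht i).sub (hx t ht i)) (hlam t ht)
    rwa [costate_pairing_deriv_eq] at hpairing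
  · exact Continuous.intervalIntegrable (by fun_prop) t0 tf

/-- if `(x, λ)` solves the two-point boundary value problem
`ẋ = A x + B u⁻ − B Bᵀ λ`, `x(t₀) = x₀`, `x(t_f) = x_f`,
`λ̇ = −x + x⁻ − Aᵀ λ`, then `(y, v) = (x, u⁻ − Bᵀλ)` satisfies the
variational inequality characterizing the projection of `(x⁻, u⁻)` onto the
affine set defined by the controlled ODE with those boundary conditions. -/
theorem stmt_12 (n m : ℕ) (t0 tf : ℝ) (hts : t0 ≤ tf)
    (A : ℝ → Matrix (Fin n) (Fin n) ℝ) (B : ℝ → Matrix (Fin n) (Fin m) ℝ)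
    (hA : Continuous A) (hB : Continuous B)
    (x0 xf : Fin n → ℝ)
    (xm : ℝ → Fin n → ℝ) (um : ℝ → Fin m → ℝ)
    (hxm : Continuous xm) (hum : Continuous um)
    (x lam : ℝ → Fin n → ℝ) (hxc : Continuous x) (hlamc : Continuous lam)
    (hx : ∀ t ∈ Set.Icc t0 tf, ∀ i, HasDerivAt (fun s => x s i)
      ((A t).mulVec (x t) i + (B t).mulVec (um t) i
        - ((B t) * (B t).transpose).mulVec (lam t) i) t)
    (hlam : ∀ t ∈ Set.Icc t0 tf, ∀ i, HasDerivAt (fun s => lam s i)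
      (-(x t i) + xm t i - (A t).transpose.mulVec (lam t) i) t)
    (hx0 : x t0 = x0) (hxf : x tf = xf) :
    ∀ (ytil : ℝ → Fin n → ℝ) (vtil : ℝ → Fin m → ℝ),
      Continuous ytil → Continuous vtil →
      (∀ t ∈ Set.Icc t0 tf, ∀ i, HasDerivAt (fun s => ytil s i)
        ((A t).mulVec (ytil t) i + (B t).mulVec (vtil t) i) t) →
      ytil t0 = x0 → ytil tf = xf →
      (∫ t in Set.Icc t0 tf,
          ((∑ i, (ytil t i - x t i) * (xm t i - x t i)) +
            ∑ j, (vtil t j - (um t j - (B t).transpose.mulVec (lam t) j)) *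
              (um t j - (um t j - (B t).transpose.mulVec (lam t) j)))) ≤ 0 :=
  stmt_12_general n m t0 tf hts A B hB x0 xf xm um hxm hum x lam hxc hlamc hx hlam hx0 hxf
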